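/- Let k_a, k_b, β_a, β_b, a, b, c, d, e > 0 with β_b·b/c < 3 and β_b·d/e < 3. Then the function F(x, y, z) = k_a·Q(√(β_a·a·x)) − k_b·Q(√(β_b·b/(c+y))) − k_b·Q(√(β_b·d/(e+z))) is strictly convex on the convex set (0, ∞) × [0, ∞) × [0, ∞), where Q is the Gaussian Q-function. -/

import Mathlib

/-- The Gaussian Q-function: the tail probability of the standard normal distribution. -/
noncomputable def gaussQ (t : ℝ) : ℝ :=
  ∫ u in Set.Ioi t, (1 / Real.sqrt (2 * Real.pi)) * Real.exp (-u ^ 2 / 2)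

/-!
With `φ = gaussianPDFReal 0 1` we have `Q' = -φ` and `φ'(t) = -t φ(t)`, so for a twice
differentiable `g`, `(Q ∘ g)'' = φ(g) (g g'² - g'')`. For `g x = √(m x)` the bracket is
`m²/(4g) + m²/(4g³) > 0`, so `Q ∘ g` is strictly convex. For `g y = √(s/(c+y))` it is
`-g (3 - g²)/(4 (c+y)²)`, negative as long as `g² = s/(c+y) < 3`, which holds for all `y ≥ 0`
once `s/c < 3`; so `-Q ∘ g` is strictly convex. A sum of strictly convex functions of separate
variables is strictly convex on the product.
-/

open Real Set MeasureTheory ProbabilityTheory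

theorem hasDerivAt_integral_Ioi {f : ℝ → ℝ} {t : ℝ} (hf : Integrable f)
    (hft : ContinuousAt f t) :
    HasDerivAt (fun s => ∫ u in Ioi s, f u) (-f t) t := by
  have hprim : HasDerivAt (fun s => ∫ u in (0 : ℝ)..s, f u) (f t) t :=
    intervalIntegral.integral_hasDerivAt_right hf.intervalIntegrable
      hf.aestronglyMeasurable.stronglyMeasurableAtFilter hft
  refine (hprim.const_sub (∫ u in Ioi 0, f u)).congr_of_eventuallyEq
    (Filter.Eventually.of_forall fun s => ?_)
  show ∫ u in Ioi s, f u = (∫ u in Ioi 0, f u) - ∫ u in (0 : ℝ)..s, f u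
  rw [← intervalIntegral.integral_Ioi_sub_Ioi' hf.integrableOn hf.integrableOn, sub_sub_cancel]

theorem hasDerivAt_gaussianPDFReal (μ : ℝ) (v : NNReal) (x : ℝ) :
    HasDerivAt (gaussianPDFReal μ v) (-((x - μ) / v) * gaussianPDFReal μ v x) x := by
  rw [gaussianPDFReal_def]
  have := ((((hasDerivAt_id x).sub_const μ).pow 2).neg.div_const (2 * (v : ℝ))).exp.const_mul
    (√(2 * π * v))⁻¹
  refine this.congr_deriv ?_
  simp only [Pi.pow_apply, Pi.neg_apply, id]
  rcases eq_or_ne (v : ℝ) 0 with hv | hv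
  · simp [hv]
  · field_simp
    ring

theorem gaussQ_eq_integral_gaussianPDFReal (t : ℝ) :
    gaussQ t = ∫ u in Ioi t, gaussianPDFReal 0 1 u := by
  simp [gaussQ, gaussianPDFReal]

theorem hasDerivAt_gaussQ (t : ℝ) : HasDerivAt gaussQ (-gaussianPDFReal 0 1 t) t := by
  simp_rw [funext gaussQ_eq_integral_gaussianPDFReal]
  exact hasDerivAt_integral_Ioi (integrable_gaussianPDFReal 0 1)
    (hasDerivAt_gaussianPDFReal 0 1 t).continuousAt

theorem continuous_gaussQ : Continuous gaussQ :=
  continuous_iff_continuousAt.2 fun t => (hasDerivAt_gaussQ t).continuousAt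

theorem strictConvexOn_of_hasDerivAt2_pos {D : Set ℝ} (hD : Convex ℝ D) {f f' f'' : ℝ → ℝ}
    (hf : ContinuousOn f D) (hf' : ∀ x ∈ interior D, HasDerivAt f (f' x) x)
    (hf'' : ∀ x ∈ interior D, HasDerivAt f' (f'' x) x)
    (hpos : ∀ x ∈ interior D, 0 < f'' x) :
    StrictConvexOn ℝ D f := by
  have hmono : StrictMonoOn f' (interior D) := by
    refine strictMonoOn_of_hasDerivWithinAt_pos hD.interior (f' := f'')
      (fun x hx => (hf'' x hx).continuousAt.continuousWithinAt) ?_ ?_ <;>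
      rw [interior_interior]
    exacts [fun x hx => (hf'' x hx).hasDerivWithinAt, hpos]
  exact hmono.congr (fun x hx => (hf' x hx).deriv.symm) |>.strictConvexOn_of_deriv hD hf

theorem StrictConvexOn.prod_add {𝕜 E F β : Type*} [Semiring 𝕜] [PartialOrder 𝕜]
    [AddCommMonoid E] [AddCommMonoid F] [AddCommMonoid β] [PartialOrder β]
    [IsOrderedCancelAddMonoid β] [Module 𝕜 E] [Module 𝕜 F] [Module 𝕜 β]
    {s : Set E} {t : Set F} {f : E → β} {g : F → β}
    (hf : StrictConvexOn 𝕜 s f) (hg : StrictConvexOn 𝕜 t g) :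
    StrictConvexOn 𝕜 (s ×ˢ t) fun p => f p.1 + g p.2 := by
  refine ⟨hf.1.prod hg.1, ?_⟩
  rintro ⟨x₁, y₁⟩ ⟨hx₁, hy₁⟩ ⟨x₂, y₂⟩ ⟨hx₂, hy₂⟩ hne a b ha hb hab
  simp only [Prod.smul_mk, Prod.mk_add_mk, smul_add]
  rw [add_add_add_comm]
  by_cases hx : x₁ = x₂
  · subst hx
    have hy : y₁ ≠ y₂ := fun hy => hne (by rw [hy])
    exact add_lt_add_of_le_of_lt (hf.convexOn.2 hx₁ hx₁ ha.le hb.le hab)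
      (hg.2 hy₁ hy₂ hy ha hb hab)
  · exact add_lt_add_of_lt_of_le (hf.2 hx₁ hx₂ hx ha hb hab)
      (hg.convexOn.2 hy₁ hy₂ ha.le hb.le hab)

theorem strictConvexOn_mul_gaussQ_comp {D : Set ℝ} (hD : Convex ℝ D) {k : ℝ}
    {g g' g'' : ℝ → ℝ}
    (hg : ContinuousOn g D) (hg' : ∀ x ∈ interior D, HasDerivAt g (g' x) x)
    (hg'' : ∀ x ∈ interior D, HasDerivAt g' (g'' x) x)
    (hpos : ∀ x ∈ interior D, 0 < k * (g x * g' x ^ 2 - g'' x)) :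
    StrictConvexOn ℝ D fun x => k * gaussQ (g x) := by
  refine strictConvexOn_of_hasDerivAt2_pos hD
    ((continuous_gaussQ.comp_continuousOn hg).const_smul k)
    (f' := fun x => -k * (gaussianPDFReal 0 1 (g x) * g' x))
    (f'' := fun x => gaussianPDFReal 0 1 (g x) * (k * (g x * g' x ^ 2 - g'' x)))
    (fun x hx => ?_) (fun x hx => ?_)
    (fun x hx => mul_pos (gaussianPDFReal_pos _ _ _ one_ne_zero) (hpos x hx))
  · exact (((hasDerivAt_gaussQ (g x)).comp x (hg' x hx)).const_mul k).congr_deriv (by ring)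
  · refine ((((hasDerivAt_gaussianPDFReal 0 1 (g x)).comp x (hg' x hx)).mul
      (hg'' x hx)).const_mul (-k)).congr_deriv ?_
    simp only [Function.comp_apply, sub_zero, NNReal.coe_one, div_one]
    ring

theorem hasDerivAt_sqrt_mul {m x : ℝ} (hmx : 0 < m * x) :
    HasDerivAt (fun x => √(m * x)) (m / (2 * √(m * x))) x := by
  simpa using ((hasDerivAt_id x).const_mul m).sqrt hmx.ne'

theorem hasDerivAt_sqrt_div_add {s c y : ℝ} (hs : 0 < s) (hw : 0 < c + y) :
    HasDerivAt (fun y => √(s / (c + y))) (-√(s / (c + y)) / (2 * (c + y))) y := by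
  refine ((hasDerivAt_const y s).div ((hasDerivAt_id y).const_add c) hw.ne' |>.sqrt
    (div_pos hs hw).ne').congr_deriv ?_
  simp only [id, Pi.div_apply, zero_mul, zero_sub]
  field_simp
  rw [sq_sqrt (div_pos hs hw).le]
  field_simp

theorem strictConvexOn_mul_gaussQ_sqrt_mul {k m : ℝ} (hk : 0 < k) (hm : 0 < m) :
    StrictConvexOn ℝ (Ioi 0) fun x => k * gaussQ √(m * x) := by
  refine strictConvexOn_mul_gaussQ_comp (convex_Ioi 0) (by fun_prop)
    (g' := fun x => m / (2 * √(m * x))) (g'' := fun x => -m ^ 2 / (4 * √(m * x) ^ 3))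
    (fun x hx => ?_) (fun x hx => ?_) (fun x hx => ?_) <;>
    rw [interior_Ioi] at hx <;> have hr : 0 < √(m * x) := sqrt_pos.2 (mul_pos hm hx)
  · exact hasDerivAt_sqrt_mul (mul_pos hm hx)
  · refine ((hasDerivAt_const x m).div ((hasDerivAt_sqrt_mul (mul_pos hm hx)).const_mul 2)
      (by positivity)).congr_deriv ?_
    field_simp
    ring
  · have : √(m * x) * (m / (2 * √(m * x))) ^ 2 - -m ^ 2 / (4 * √(m * x) ^ 3) =
        m ^ 2 / 4 * (1 / √(m * x) + 1 / √(m * x) ^ 3) := by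
      field_simp
      ring
    rw [this]
    positivity

theorem strictConvexOn_neg_mul_gaussQ_sqrt_div {k s c : ℝ} (hk : 0 < k) (hs : 0 < s) (hc : 0 < c)
    (hsc : s / c < 3) :
    StrictConvexOn ℝ (Ici 0) fun y => -k * gaussQ √(s / (c + y)) := by
  have hw : ∀ y ∈ Ici (0 : ℝ), 0 < c + y := fun y hy => add_pos_of_pos_of_nonneg hc hy
  refine strictConvexOn_mul_gaussQ_comp (convex_Ici 0)
    (continuousOn_const.div (by fun_prop) fun y hy => (hw y hy).ne').sqrt
    (g' := fun y => -√(s / (c + y)) / (2 * (c + y)))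
    (g'' := fun y => 3 * √(s / (c + y)) / (4 * (c + y) ^ 2))
    (fun y hy => ?_) (fun y hy => ?_) (fun y hy => ?_) <;>
    rw [interior_Ici] at hy <;> have hwy := hw y (mem_Ici_of_Ioi hy)
  · exact hasDerivAt_sqrt_div_add hs hwy
  · refine ((hasDerivAt_sqrt_div_add hs hwy).neg.div
      (((hasDerivAt_id y).const_add c).const_mul 2) (by positivity)).congr_deriv ?_
    simp only [id, Pi.neg_apply]
    field_simp
    ring
  · have hv : s / (c + y) < 3 :=
      (div_le_div_of_nonneg_left hs.le hc (le_add_of_nonneg_right (le_of_lt hy))).trans_lt hsc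
    have hr : 0 < √(s / (c + y)) := sqrt_pos.2 (div_pos hs hwy)
    have : -k * (√(s / (c + y)) * (-√(s / (c + y)) / (2 * (c + y))) ^ 2 -
        3 * √(s / (c + y)) / (4 * (c + y) ^ 2)) =
        k * √(s / (c + y)) * (3 - √(s / (c + y)) ^ 2) / (4 * (c + y) ^ 2) := by
      field_simp
      ring
    rw [this, sq_sqrt (div_pos hs hwy).le]
    have : 0 < 3 - s / (c + y) := by linarith
    positivity

/-- Strict convexity of the single-agent objective in the power allocation game:
`F(x, y, z) = k_a·Q(√(β_a a x)) − k_b·Q(√(β_b b/(c+y))) − k_b·Q(√(β_b d/(e+z)))`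
is strictly convex on `(0, ∞) × [0, ∞) × [0, ∞)` provided `β_b·b/c < 3` and
`β_b·d/e < 3`. -/
theorem strictConvexOn_team_objective (ka kb βa βb a b c d e : ℝ)
    (hka : 0 < ka) (hkb : 0 < kb) (hβa : 0 < βa) (hβb : 0 < βb)
    (ha : 0 < a) (hb : 0 < b) (hc : 0 < c) (hd : 0 < d) (he : 0 < e)
    (h1 : βb * (b / c) < 3) (h2 : βb * (d / e) < 3) :
    StrictConvexOn ℝ (Set.Ioi (0 : ℝ) ×ˢ Set.Ici (0 : ℝ) ×ˢ Set.Ici (0 : ℝ))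
      (fun p : ℝ × ℝ × ℝ =>
        ka * gaussQ (Real.sqrt (βa * a * p.1))
          - kb * gaussQ (Real.sqrt (βb * (b / (c + p.2.1))))
          - kb * gaussQ (Real.sqrt (βb * (d / (e + p.2.2))))) := by
  have hx := strictConvexOn_mul_gaussQ_sqrt_mul hka (mul_pos hβa ha)
  have hy := strictConvexOn_neg_mul_gaussQ_sqrt_div hkb (mul_pos hβb hb) hc
    (by rwa [mul_div_assoc])
  have hz := strictConvexOn_neg_mul_gaussQ_sqrt_div hkb (mul_pos hβb hd) he
    (by rwa [mul_div_assoc])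
  refine (hx.prod_add (hy.prod_add hz)).congr fun p _ => ?_
  simp only [mul_div_assoc]
  ring
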